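/- For all natural numbers k ≠ l and all a ∈ W_k, b ∈ W_l, one has φ(a⋆ b) = 0. -/
import Mathlib

open scoped ComplexOrder

noncomputable section

/-- The product `S_{μ₁} ⋯ S_{μ_p}` along a word `μ` (with `S_μ = 1` for the empty word). -/
def wordProd {A : Type*} [Monoid A] {n : ℕ} (S : Fin n → A) (μ : List (Fin n)) : A :=
  (μ.map S).prod

/-- `B_{r,s} = Span { S_μ S_ν⋆ : |μ| = r, |ν| = s }`;  `F_k = B_{k,k}`. -/
def Bspan {A : Type*} [Ring A] [Algebra ℂ A] [StarRing A] {n : ℕ}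
    (S : Fin n → A) (r s : ℕ) : Submodule ℂ A :=
  Submodule.span ℂ
    {a | ∃ μ ν : List (Fin n), μ.length = r ∧ ν.length = s ∧
        a = wordProd S μ * star (wordProd S ν)}

/-- `W_0 = ℂ·1` and, for `k ≥ 1`,
`W_k = {x ∈ F_k : φ(y⋆ x) = 0 for all y ∈ F_{k-1}}`. -/
def Wsub {A : Type*} [NormedRing A] [NormedAlgebra ℂ A] [StarRing A] {n : ℕ}
    (φ : A →L[ℂ] ℂ) (S : Fin n → A) : ℕ → Submodule ℂ A
  | 0 => Submodule.span ℂ {(1 : A)}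
  | (k + 1) =>
      Bspan S (k + 1) (k + 1) ⊓
        ⨅ y ∈ Bspan S k k,
          LinearMap.ker ((φ : A →ₗ[ℂ] ℂ) ∘ₗ LinearMap.mulLeft ℂ (star y))

/-- `V¹_{k,r} = Span { S_μ x : |μ| = r, x ∈ W_k }`. -/
def V1 {A : Type*} [NormedRing A] [NormedAlgebra ℂ A] [StarRing A] {n : ℕ}
    (φ : A →L[ℂ] ℂ) (S : Fin n → A) (k r : ℕ) : Submodule ℂ A :=
  Submodule.span ℂ
    {a | ∃ μ : List (Fin n), ∃ x : A, μ.length = r ∧ x ∈ Wsub φ S k ∧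
        a = wordProd S μ * x}

/-- `V²_{k,r} = Span { x S_γ⋆ : |γ| = r, x ∈ W_k }`. -/
def V2 {A : Type*} [NormedRing A] [NormedAlgebra ℂ A] [StarRing A] {n : ℕ}
    (φ : A →L[ℂ] ℂ) (S : Fin n → A) (k r : ℕ) : Submodule ℂ A :=
  Submodule.span ℂ
    {a | ∃ γ : List (Fin n), ∃ x : A, γ.length = r ∧ x ∈ Wsub φ S k ∧
        a = x * star (wordProd S γ)}

/-- Auxiliary: span of all `S_μ S_ν⋆` over words of arbitrary lengths. -/
def Tspan {A : Type*} [Ring A] [Algebra ℂ A] [StarRing A] {n : ℕ}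
    (S : Fin n → A) : Submodule ℂ A :=
  Submodule.span ℂ {a | ∃ μ ν : List (Fin n), a = wordProd S μ * star (wordProd S ν)}

section Aux

variable {A : Type*} [NormedRing A] [StarRing A] [CStarRing A]
    [NormedAlgebra ℂ A] [StarModule ℂ A] [CompleteSpace A]
    {n : ℕ} {S : Fin n → A}

lemma wordProd_nil : wordProd S ([] : List (Fin n)) = 1 := rfl

lemma wordProd_cons (i : Fin n) (μ : List (Fin n)) :
    wordProd S (i :: μ) = S i * wordProd S μ := by simp [wordProd]

lemma wordProd_append (μ ν : List (Fin n)) :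
    wordProd S (μ ++ ν) = wordProd S μ * wordProd S ν := by simp [wordProd]

lemma orth (hS1 : ∀ i, star (S i) * S i = 1) (hS2 : ∑ j, S j * star (S j) = 1)
    {i j : Fin n} (hij : i ≠ j) : star (S i) * S j = 0 := by
  letI : CStarAlgebra A := {}
  letI := CStarAlgebra.spectralOrder A
  haveI := CStarAlgebra.spectralOrderedRing A
  have hterm : ∀ m : Fin n, star (S j) * (S m * star (S m)) * S j
      = star (star (S m) * S j) * (star (S m) * S j) := by
    intro m; simp [star_mul, mul_assoc]
  have key : ∑ m, star (S j) * (S m * star (S m)) * S j = 1 := by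
    rw [← Finset.sum_mul, ← Finset.mul_sum, hS2, mul_one, hS1]
  have hj : star (S j) * (S j * star (S j)) * S j = 1 := by
    rw [hterm j, hS1 j]; simp
  rw [← Finset.add_sum_erase _ _ (Finset.mem_univ j), hj] at key
  have hsum0 : ∑ m ∈ Finset.univ.erase j, star (S j) * (S m * star (S m)) * S j = 0 := by
    have := add_eq_left.mp key
    exact this
  have hnn : ∀ m ∈ Finset.univ.erase j, 0 ≤ star (S j) * (S m * star (S m)) * S j := by
    intro m _; rw [hterm m]; exact star_mul_self_nonneg _
  have hzero := (Finset.sum_eq_zero_iff_of_nonneg hnn).mp hsum0 i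
    (Finset.mem_erase.mpr ⟨hij, Finset.mem_univ i⟩)
  rw [hterm i] at hzero
  exact (CStarRing.star_mul_self_eq_zero_iff _).mp hzero

lemma reduce (hS1 : ∀ i, star (S i) * S i = 1) (hS2 : ∑ j, S j * star (S j) = 1) :
    ∀ ν α : List (Fin n), ∃ (c : ℂ) (γ δ : List (Fin n)),
      star (wordProd S ν) * wordProd S α = c • (wordProd S γ * star (wordProd S δ)) := by
  intro ν
  induction ν with
  | nil => exact fun α => ⟨1, α, [], by simp [wordProd_nil]⟩
  | cons i ν ih =>
    intro α
    match α with
    | [] => exact ⟨1, [], i :: ν, by simp [wordProd_nil]⟩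
    | j :: α =>
      have hred : star (wordProd S (i :: ν)) * wordProd S (j :: α)
          = star (wordProd S ν) * ((star (S i) * S j) * wordProd S α) := by
        simp [wordProd_cons, star_mul, mul_assoc]
      by_cases hij : i = j
      · subst hij
        obtain ⟨c, γ, δ, h⟩ := ih α
        exact ⟨c, γ, δ, by rw [hred, hS1 i, one_mul, h]⟩
      · exact ⟨0, [], [], by rw [hred, orth hS1 hS2 hij]; simp⟩

lemma star_mem_Tspan {x : A} (hx : x ∈ Tspan S) : star x ∈ Tspan S := by
  induction hx using Submodule.span_induction with
  | mem x h =>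
    obtain ⟨μ, ν, rfl⟩ := h
    rw [star_mul, star_star]
    exact Submodule.subset_span ⟨ν, μ, rfl⟩
  | zero => simp
  | add x y _ _ hx hy => rw [star_add]; exact add_mem hx hy
  | smul c x _ hx => rw [star_smul]; exact Submodule.smul_mem _ _ hx

lemma mul_mem_Tspan (hS1 : ∀ i, star (S i) * S i = 1)
    (hS2 : ∑ j, S j * star (S j) = 1)
    {a b : A} (ha : a ∈ Tspan S) (hb : b ∈ Tspan S) : a * b ∈ Tspan S := by
  have key : Tspan S * Tspan S ≤ Tspan S := by
    rw [Tspan, Submodule.span_mul_span, Submodule.span_le]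
    rintro x ⟨g1, ⟨μ, ν, rfl⟩, g2, ⟨α, β, rfl⟩, rfl⟩
    beta_reduce
    obtain ⟨c, γ, δ, h⟩ := reduce hS1 hS2 ν α
    have assoc1 : (wordProd S μ * star (wordProd S ν)) * (wordProd S α * star (wordProd S β))
        = wordProd S μ * ((star (wordProd S ν) * wordProd S α) * star (wordProd S β)) := by
      rw [mul_assoc, ← mul_assoc (star (wordProd S ν))]
    rw [assoc1, h, smul_mul_assoc, mul_smul_comm]
    refine Submodule.smul_mem _ _ (Submodule.subset_span ⟨μ ++ γ, β ++ δ, ?_⟩)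
    simp [wordProd_append, star_mul, mul_assoc]
  exact key (Submodule.mul_mem_mul ha hb)

lemma phi_star (φ : A →L[ℂ] ℂ)
    (hφ : ∀ μ ν : List (Fin n),
      φ (wordProd S μ * star (wordProd S ν)) =
        if μ = ν then ((n : ℂ) ^ μ.length)⁻¹ else 0)
    {x : A} (hx : x ∈ Tspan S) : φ (star x) = starRingEnd ℂ (φ x) := by
  induction hx using Submodule.span_induction with
  | mem x h =>
    obtain ⟨μ, ν, rfl⟩ := h
    rw [star_mul, star_star, hφ, hφ]
    by_cases h : μ = ν
    · subst h; simp
    · rw [if_neg h, if_neg (fun hh => h hh.symm), map_zero]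
  | zero => simp
  | add x y _ _ hx hy => rw [star_add, map_add, map_add, map_add, hx, hy]
  | smul c x _ hx =>
    rw [star_smul, map_smul, map_smul, hx, smul_eq_mul, smul_eq_mul, map_mul]
    rfl

lemma Bspan_succ (hS2 : ∑ j, S j * star (S j) = 1) (k : ℕ) :
    Bspan S k k ≤ Bspan S (k + 1) (k + 1) := by
  rw [Bspan, Submodule.span_le]
  rintro x ⟨μ, ν, hμ, hν, rfl⟩
  have hterm : ∀ j : Fin n, wordProd S (μ ++ [j]) * star (wordProd S (ν ++ [j]))
      = wordProd S μ * ((S j * star (S j)) * star (wordProd S ν)) := by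
    intro j; simp [wordProd_append, wordProd, star_mul, mul_assoc]
  have hsum : wordProd S μ * star (wordProd S ν)
      = ∑ j, wordProd S (μ ++ [j]) * star (wordProd S (ν ++ [j])) := by
    simp only [hterm, ← Finset.mul_sum, ← Finset.sum_mul, hS2, one_mul]
  rw [hsum]
  exact Submodule.sum_mem _ fun j _ =>
    Submodule.subset_span ⟨μ ++ [j], ν ++ [j], by simp [hμ], by simp [hν], rfl⟩

lemma Bspan_le_Bspan (hS2 : ∑ j, S j * star (S j) = 1) {k m : ℕ} (h : k ≤ m) :
    Bspan S k k ≤ Bspan S m m := by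
  induction m, h using Nat.le_induction with
  | base => exact le_rfl
  | succ m _ ih => exact ih.trans (Bspan_succ hS2 m)

lemma Wsub_le_Bspan (φ : A →L[ℂ] ℂ) (k : ℕ) : Wsub φ S k ≤ Bspan S k k := by
  cases k with
  | zero =>
    rw [Wsub, Submodule.span_le, Set.singleton_subset_iff]
    exact Submodule.subset_span ⟨[], [], rfl, rfl, by simp [wordProd_nil]⟩
  | succ k => exact inf_le_left

lemma Bspan_le_Tspan (r s : ℕ) : Bspan S r s ≤ Tspan S :=
  Submodule.span_mono fun x ⟨μ, ν, _, _, hx⟩ => ⟨μ, ν, hx⟩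

lemma main_lt (hS2 : ∑ j, S j * star (S j) = 1) (φ : A →L[ℂ] ℂ)
    {k l : ℕ} (hkl : k < l) {a b : A}
    (ha : a ∈ Wsub φ S k) (hb : b ∈ Wsub φ S l) : φ (star a * b) = 0 := by
  obtain ⟨m, rfl⟩ : ∃ m, l = m + 1 := ⟨l - 1, by omega⟩
  rw [Wsub] at hb
  obtain ⟨-, hb2⟩ := Submodule.mem_inf.mp hb
  have haB : a ∈ Bspan S m m :=
    Bspan_le_Bspan hS2 (by omega) (Wsub_le_Bspan φ k ha)
  rw [Submodule.mem_iInf] at hb2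
  have := hb2 a
  rw [Submodule.mem_iInf] at this
  have h0 := this haB
  simpa using h0

end Aux

/-- For `k ≠ l`, the subspaces `W_k` and `W_l` are φ-orthogonal:
`φ(a⋆ b) = 0` for all `a ∈ W_k`, `b ∈ W_l`. -/
theorem Wsub_orthogonal
    {A : Type*} [NormedRing A] [StarRing A] [CStarRing A]
    [NormedAlgebra ℂ A] [StarModule ℂ A] [CompleteSpace A]
    {n : ℕ} (hn : 2 ≤ n) (S : Fin n → A)
    (hS1 : ∀ i, star (S i) * S i = 1)
    (hS2 : ∑ j, S j * star (S j) = 1)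
    (φ : A →L[ℂ] ℂ)
    (hφ : ∀ μ ν : List (Fin n),
      φ (wordProd S μ * star (wordProd S ν)) =
        if μ = ν then ((n : ℂ) ^ μ.length)⁻¹ else 0)
    (k l : ℕ) (hkl : k ≠ l)
    (a : A) (ha : a ∈ Wsub φ S k) (b : A) (hb : b ∈ Wsub φ S l) :
    φ (star a * b) = 0 := by
  have hWT : ∀ m : ℕ, Wsub φ S m ≤ Tspan S := fun m =>
    (Wsub_le_Bspan φ m).trans (Bspan_le_Tspan m m)
  rcases lt_or_gt_of_ne hkl with h | h
  · exact main_lt hS2 φ h ha hb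
  · have hT : star a * b ∈ Tspan S :=
      mul_mem_Tspan hS1 hS2 (star_mem_Tspan (hWT k ha)) (hWT l hb)
    have h1 := phi_star φ hφ hT
    rw [star_mul, star_star] at h1
    rw [main_lt hS2 φ h hb ha] at h1
    simpa using h1.symm
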